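/- arXiv:2501.00531 — 2 statements merged into one kernel-verified Lean document; each statement's English description precedes it below -/
import Mathlib

section
/- Let n and k be integers with 2 ≤ 2k < n. On ℝⁿ \ {0}, the function Γ(x) = C_{n,k}|x|^{2k-n}, where C_{n,k} = 1/((n-2)ω_{n-1}∏_{i=1}^{k-1}(n-2k+2(i-1))(2k-2i)), satisfies that Δ^{k-1}Γ(x) = (1/((n-2)ω_{n-1}))·|x|^{2-n}, and consequently, for any x₀ ∈ ℝⁿ, the outward normal derivative on spheres centered at x₀ satisfies -∂_ν Δ^{k-1}(C_{n,k}|x-x₀|^{2k-n}) = ω_{n-1}^{-1}|x-x₀|^{1-n} for x ≠ x₀. -/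
open MeasureTheory Real
open scoped MeasureTheory

/-- Partial derivative in the `i`-th coordinate direction on `ℝⁿ`. -/
noncomputable def pd {n : ℕ} (i : Fin n) (f : EuclideanSpace ℝ (Fin n) → ℝ) :
    EuclideanSpace ℝ (Fin n) → ℝ :=
  fun x => fderiv ℝ f x (EuclideanSpace.single i 1)

/-- The Euclidean Laplacian with the minus-sign convention `Δu = -∑ᵢ ∂ᵢᵢ u`. -/
noncomputable def lap {n : ℕ} (f : EuclideanSpace ℝ (Fin n) → ℝ) :
    EuclideanSpace ℝ (Fin n) → ℝ :=
  fun x => -∑ i, pd i (pd i f) x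

/-- `ω_{n-1}`: the surface measure ((n-1)-dimensional Hausdorff measure) of the unit
sphere `S^{n-1} ⊂ ℝⁿ`. -/
noncomputable def omegaSph (n : ℕ) : ℝ :=
  (μH[(n : ℝ) - 1] (Metric.sphere (0 : EuclideanSpace ℝ (Fin n)) 1)).toReal

/-- The normalizing constant
`C_{n,k} = 1/((n-2) ω_{n-1} ∏_{i=1}^{k-1} (n-2k+2(i-1))(2k-2i))`. -/
noncomputable def Cnk (n k : ℕ) : ℝ :=
  1 / (((n : ℝ) - 2) * omegaSph n *
    ∏ i ∈ Finset.Icc 1 (k - 1),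
      (((n : ℝ) - 2 * k + 2 * ((i : ℝ) - 1)) * (2 * (k : ℝ) - 2 * (i : ℝ))))

section Aux

variable {n : ℕ}

local notation "E" => EuclideanSpace ℝ (Fin n)

lemma my_hasFDerivAt_norm_rpow (α : ℝ) {x : E} (hx : x ≠ 0) :
    HasFDerivAt (fun y : E => ‖y‖ ^ α) ((α * ‖x‖ ^ (α - 2)) • innerSL ℝ x) x := by
  have hnx : ‖x‖ ≠ 0 := norm_ne_zero_iff.2 hx
  have hnx2 : (‖x‖ ^ 2 : ℝ) ≠ 0 := pow_ne_zero _ hnx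
  have h2 : HasFDerivAt (fun y : E => ‖y‖ ^ 2) ((2:ℕ) • innerSL ℝ x) x :=
    (hasStrictFDerivAt_norm_sq x).hasFDerivAt
  have hr : HasDerivAt (fun t : ℝ => t ^ (α / 2)) ((α / 2) * (‖x‖ ^ 2) ^ (α / 2 - 1)) (‖x‖ ^ 2) :=
    Real.hasDerivAt_rpow_const (Or.inl hnx2)
  have hcomp := hr.comp_hasFDerivAt x h2
  have heq : ((fun t : ℝ => t ^ (α / 2)) ∘ fun y : E => ‖y‖ ^ 2)
      =ᶠ[nhds x] (fun y : E => ‖y‖ ^ α) := by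
    filter_upwards [isOpen_compl_singleton.mem_nhds (by simpa using hx)] with y hy
    simp only [Function.comp]
    rw [← Real.rpow_natCast ‖y‖ 2, ← Real.rpow_mul (norm_nonneg _),
      show ((2:ℕ):ℝ) * (α / 2) = α by push_cast; ring]
  have hfin := hcomp.congr_of_eventuallyEq heq.symm
  have hsc : ((‖x‖ ^ 2 : ℝ)) ^ (α / 2 - 1) = ‖x‖ ^ (α - 2) := by
    rw [← Real.rpow_natCast ‖x‖ 2, ← Real.rpow_mul (norm_nonneg _),
      show ((2:ℕ):ℝ) * (α / 2 - 1) = α - 2 by push_cast; ring]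
  have hder : (α / 2 * (‖x‖ ^ 2) ^ (α / 2 - 1)) • ((2:ℕ) • innerSL ℝ x)
      = (α * ‖x‖ ^ (α - 2)) • innerSL ℝ x := by
    rw [← Nat.cast_smul_eq_nsmul ℝ, smul_smul, hsc]
    congr 1
    push_cast
    ring
  rw [← hder]
  exact hfin

lemma inner_single_my (x : E) (i : Fin n) :
    (innerSL ℝ x) (EuclideanSpace.single i (1:ℝ)) = x i := by
  simpa using EuclideanSpace.inner_single_right (𝕜 := ℝ) i 1 x

lemma nhds_ne_mem {x : E} (hx : x ≠ 0) : {y : E | y ≠ 0} ∈ nhds x :=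
  isOpen_compl_singleton.mem_nhds (by simpa using hx)

lemma pd_norm_rpow (c α : ℝ) (i : Fin n) (f : EuclideanSpace ℝ (Fin n) → ℝ)
    (hf : ∀ y : E, y ≠ 0 → f y = c * ‖y‖ ^ α) :
    ∀ x : E, x ≠ 0 → pd i f x = c * α * ‖x‖ ^ (α - 2) * x i := by
  intro x hx
  have heq : f =ᶠ[nhds x] (fun y : E => c * ‖y‖ ^ α) := by
    filter_upwards [nhds_ne_mem hx] with y hy using hf y hy
  have hD : HasFDerivAt (fun y : E => c * ‖y‖ ^ α)
      (c • ((α * ‖x‖ ^ (α - 2)) • innerSL ℝ x)) x :=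
    (my_hasFDerivAt_norm_rpow α hx).const_mul c
  rw [pd, heq.fderiv_eq, hD.fderiv]
  simp [inner_single_my]
  ring

lemma lap_norm_rpow (c α : ℝ) (f : EuclideanSpace ℝ (Fin n) → ℝ)
    (hf : ∀ y : E, y ≠ 0 → f y = c * ‖y‖ ^ α) :
    ∀ x : E, x ≠ 0 → lap f x = (-(c * α * (α + n - 2))) * ‖x‖ ^ (α - 2) := by
  intro x hx
  have hnx : (0:ℝ) < ‖x‖ := norm_pos_iff.2 hx
  have key : ∀ i : Fin n, pd i (pd i f) x
      = c * α * ((α - 2) * ‖x‖ ^ (α - 4) * x i * x i + ‖x‖ ^ (α - 2)) := by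
    intro i
    have hpd : ∀ y : E, y ≠ 0 → pd i f y = (c * α) * (‖y‖ ^ (α - 2) * y i) := by
      intro y hy
      rw [pd_norm_rpow c α i f hf y hy]; ring
    have heq : pd i f =ᶠ[nhds x] (fun y : E => (c * α) * (‖y‖ ^ (α - 2) * y i)) := by
      filter_upwards [nhds_ne_mem hx] with y hy using hpd y hy
    have h1 : HasFDerivAt (fun y : E => ‖y‖ ^ (α - 2))
        (((α - 2) * ‖x‖ ^ (α - 4)) • innerSL ℝ x) x := by
      have := my_hasFDerivAt_norm_rpow (α - 2) hx
      rwa [show α - 2 - 2 = α - 4 by ring] at this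
    have h2 : HasFDerivAt (fun y : E => y i) (EuclideanSpace.proj (𝕜 := ℝ) i) x :=
      (EuclideanSpace.proj (𝕜 := ℝ) i).hasFDerivAt
    have hD : HasFDerivAt (fun y : E => (c * α) * (‖y‖ ^ (α - 2) * y i)) _ x :=
      (h1.mul h2).const_mul (c * α)
    rw [pd, heq.fderiv_eq, hD.fderiv]
    simp [inner_single_my]
    ring
  rw [lap]
  rw [Finset.sum_congr rfl (fun i _ => key i)]
  rw [← Finset.mul_sum, Finset.sum_add_distrib, Finset.sum_const]
  have hsq : ∑ i : Fin n, (α - 2) * ‖x‖ ^ (α - 4) * x i * x i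
      = (α - 2) * ‖x‖ ^ (α - 4) * ∑ i : Fin n, x i * x i := by
    rw [Finset.mul_sum]; exact Finset.sum_congr rfl (fun i _ => by ring)
  have hnorm : ∑ i : Fin n, x i * x i = ‖x‖ ^ (2:ℝ) := by
    have h := real_inner_self_eq_norm_sq x
    rw [PiLp.inner_apply] at h
    simp only [RCLike.inner_apply, conj_trivial] at h
    rw [h, ← Real.rpow_natCast ‖x‖ 2]
    norm_num
  have hpow : ‖x‖ ^ (α - 4) * ‖x‖ ^ (2:ℝ) = ‖x‖ ^ (α - 2) := by
    rw [← Real.rpow_add hnx, show α - 4 + 2 = α - 2 by ring]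
  rw [hsq, hnorm, mul_assoc ((α:ℝ) - 2), hpow]
  simp only [Finset.card_univ, Fintype.card_fin, nsmul_eq_mul]
  ring

lemma iter_lap_norm_rpow (c α : ℝ) (m : ℕ) :
    ∀ x : E, x ≠ 0 → lap^[m] (fun y : E => c * ‖y‖ ^ α) x
      = (c * ∏ j ∈ Finset.range m, (-((α - 2 * j) * (α - 2 * j + n - 2))))
        * ‖x‖ ^ (α - 2 * m) := by
  induction m with
  | zero => intro x hx; simp
  | succ m ih =>
    intro x hx
    rw [Function.iterate_succ_apply']
    have := lap_norm_rpow (n := n)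
      (c * ∏ j ∈ Finset.range m, (-((α - 2 * j) * (α - 2 * j + n - 2))))
      (α - 2 * m) (lap^[m] (fun y : E => c * ‖y‖ ^ α)) ih x hx
    rw [this, Finset.prod_range_succ]
    rw [show α - 2 * m - 2 = α - 2 * (m + 1 : ℕ) by push_cast; ring]
    push_cast
    ring

lemma my_fderiv_comp_sub (f : EuclideanSpace ℝ (Fin n) → ℝ) (x₀ x : E) :
    fderiv ℝ (fun y => f (y - x₀)) x = fderiv ℝ f (x - x₀) := by
  by_cases h : DifferentiableAt ℝ f (x - x₀)
  · have := (h.hasFDerivAt.comp x ((hasFDerivAt_id x).sub_const x₀)).fderiv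
    exact this
  · have h2 : ¬ DifferentiableAt ℝ (fun y => f (y - x₀)) x := by
      intro hD
      apply h
      have hx' : x - x₀ + x₀ = x := by abel
      have hc : DifferentiableAt ℝ ((fun y => f (y - x₀)) ∘ (fun z : E => z + x₀)) (x - x₀) :=
        DifferentiableAt.comp _ (by rwa [hx']) (differentiableAt_id.add_const x₀)
      have hcf : ((fun y => f (y - x₀)) ∘ (fun z : E => z + x₀)) = f := by
        funext z; simp [Function.comp]
      rwa [hcf] at hc
    rw [fderiv_zero_of_not_differentiableAt h, fderiv_zero_of_not_differentiableAt h2]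

lemma pd_comp_sub (f : EuclideanSpace ℝ (Fin n) → ℝ) (x₀ : E) (i : Fin n) :
    pd i (fun y => f (y - x₀)) = fun x => pd i f (x - x₀) := by
  funext x
  rw [pd, pd, my_fderiv_comp_sub]

lemma lap_comp_sub (f : EuclideanSpace ℝ (Fin n) → ℝ) (x₀ : E) :
    lap (fun y => f (y - x₀)) = fun x => lap f (x - x₀) := by
  funext x
  rw [lap, lap]
  congr 1
  refine Finset.sum_congr rfl (fun i _ => ?_)
  rw [pd_comp_sub, pd_comp_sub]

lemma iter_lap_comp_sub (f : EuclideanSpace ℝ (Fin n) → ℝ) (x₀ : E) (m : ℕ) :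
    lap^[m] (fun y => f (y - x₀)) = fun x => lap^[m] f (x - x₀) := by
  induction m with
  | zero => rfl
  | succ m ih =>
    rw [Function.iterate_succ_apply', Function.iterate_succ_apply', ih, lap_comp_sub]

end Aux

/-- For `2 ≤ 2k < n`, the fundamental solution `Γ(x) = C_{n,k} |x|^{2k-n}` satisfies
`Δ^{k-1}Γ = (1/((n-2)ω_{n-1})) |x|^{2-n}` on `ℝⁿ \ {0}`, and consequently the outward
normal derivative on spheres centered at `x₀` satisfies
`-∂_ν Δ^{k-1}(C_{n,k}|x-x₀|^{2k-n}) = ω_{n-1}⁻¹ |x-x₀|^{1-n}` for `x ≠ x₀`. -/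
theorem fundamental_solution_iterated_lap {n k : ℕ} (hk : 2 ≤ 2 * k) (hkn : 2 * k < n) :
    (∀ x : EuclideanSpace ℝ (Fin n), x ≠ 0 →
      (lap^[k - 1] (fun y => Cnk n k * ‖y‖ ^ ((2 * (k : ℝ)) - n))) x
        = (1 / (((n : ℝ) - 2) * omegaSph n)) * ‖x‖ ^ ((2 : ℝ) - n)) ∧
    (∀ x₀ x : EuclideanSpace ℝ (Fin n), x ≠ x₀ →
      -(fderiv ℝ (lap^[k - 1] (fun y => Cnk n k * ‖y - x₀‖ ^ ((2 * (k : ℝ)) - n))) x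
          ((‖x - x₀‖)⁻¹ • (x - x₀)))
        = (omegaSph n)⁻¹ * ‖x - x₀‖ ^ ((1 : ℝ) - n)) := by
  have hk1 : 1 ≤ k := by omega
  have hn2 : (2:ℝ) < (n:ℝ) := by exact_mod_cast (by omega : 2 < n)
  have hn2' : (n:ℝ) - 2 ≠ 0 := by linarith
  have h2kn : 2 * (k:ℝ) < (n:ℝ) := by exact_mod_cast hkn
  have hPpos : 0 < ∏ i ∈ Finset.Icc 1 (k - 1),
      (((n : ℝ) - 2 * k + 2 * ((i : ℝ) - 1)) * (2 * (k : ℝ) - 2 * (i : ℝ))) := by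
    apply Finset.prod_pos
    intro i hi
    obtain ⟨hi1, hi2⟩ := Finset.mem_Icc.1 hi
    have hc1 : (1:ℝ) ≤ (i:ℝ) := by exact_mod_cast hi1
    have hc2 : (i:ℝ) + 1 ≤ (k:ℝ) := by exact_mod_cast (by omega : i + 1 ≤ k)
    apply mul_pos <;> linarith
  have hPQ : (∏ i ∈ Finset.Icc 1 (k - 1),
        (((n : ℝ) - 2 * k + 2 * ((i : ℝ) - 1)) * (2 * (k : ℝ) - 2 * (i : ℝ))))
      = ∏ j ∈ Finset.range (k - 1),
        (-((2 * (k:ℝ) - (n:ℝ) - 2 * j) * (2 * (k:ℝ) - (n:ℝ) - 2 * j + (n:ℝ) - 2))) := by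
    rw [show Finset.Icc 1 (k - 1) = Finset.Ico 1 k from by
      rw [← Finset.Ico_add_one_right_eq_Icc]; congr 1; omega]
    rw [Finset.prod_Ico_eq_prod_range]
    apply Finset.prod_congr rfl
    intro j _
    push_cast
    ring
  have hcoeff : Cnk n k * (∏ j ∈ Finset.range (k - 1),
        (-((2 * (k:ℝ) - (n:ℝ) - 2 * j) * (2 * (k:ℝ) - (n:ℝ) - 2 * j + (n:ℝ) - 2))))
      = 1 / (((n:ℝ) - 2) * omegaSph n) := by
    rw [← hPQ, Cnk, one_div, mul_inv, mul_assoc,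
      inv_mul_cancel₀ (ne_of_gt hPpos), mul_one, one_div]
  have hexp : 2 * (k:ℝ) - (n:ℝ) - 2 * ((k - 1 : ℕ) : ℝ) = 2 - (n:ℝ) := by
    rw [Nat.cast_sub hk1]; push_cast; ring
  have main : ∀ x : EuclideanSpace ℝ (Fin n), x ≠ 0 →
      (lap^[k - 1] (fun y => Cnk n k * ‖y‖ ^ ((2 * (k : ℝ)) - n))) x
        = (1 / (((n : ℝ) - 2) * omegaSph n)) * ‖x‖ ^ ((2 : ℝ) - n) := by
    intro x hx
    rw [iter_lap_norm_rpow (Cnk n k) (2 * (k:ℝ) - n) (k - 1) x hx, hexp, hcoeff]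
  refine ⟨main, ?_⟩
  intro x₀ x hx
  have hz : x - x₀ ≠ 0 := sub_ne_zero.2 hx
  have htr := iter_lap_comp_sub (n := n)
    (fun y => Cnk n k * ‖y‖ ^ ((2 * (k : ℝ)) - n)) x₀ (k - 1)
  rw [htr, my_fderiv_comp_sub]
  have heq : (lap^[k - 1] (fun y : EuclideanSpace ℝ (Fin n) => Cnk n k * ‖y‖ ^ ((2 * (k : ℝ)) - n)))
      =ᶠ[nhds (x - x₀)] (fun y : EuclideanSpace ℝ (Fin n) =>
        (1 / (((n : ℝ) - 2) * omegaSph n)) * ‖y‖ ^ ((2 : ℝ) - n)) := by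
    filter_upwards [nhds_ne_mem hz] with y hy using main y hy
  have hD : HasFDerivAt (fun y : EuclideanSpace ℝ (Fin n) =>
        (1 / (((n : ℝ) - 2) * omegaSph n)) * ‖y‖ ^ ((2 : ℝ) - n))
      ((1 / (((n : ℝ) - 2) * omegaSph n)) • ((((2:ℝ) - n) * ‖x - x₀‖ ^ ((2:ℝ) - n - 2)) •
        innerSL ℝ (x - x₀))) (x - x₀) :=
    (my_hasFDerivAt_norm_rpow ((2:ℝ) - n) hz).const_mul _
  rw [heq.fderiv_eq, hD.fderiv]
  have hnz : (0:ℝ) < ‖x - x₀‖ := norm_pos_iff.2 hz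
  have hinner : (innerSL ℝ (x - x₀)) ((‖x - x₀‖)⁻¹ • (x - x₀)) = ‖x - x₀‖ := by
    rw [innerSL_apply_apply, real_inner_smul_right, real_inner_self_eq_norm_sq]
    field_simp
  rw [ContinuousLinearMap.smul_apply, ContinuousLinearMap.smul_apply, hinner]
  have hpow : ‖x - x₀‖ ^ ((2:ℝ) - n - 2) * ‖x - x₀‖ = ‖x - x₀‖ ^ ((1:ℝ) - n) := by
    nth_rewrite 2 [← Real.rpow_one ‖x - x₀‖]
    rw [← Real.rpow_add hnz, show (2:ℝ) - n - 2 + 1 = 1 - n by ring]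
  rw [smul_eq_mul, smul_eq_mul, mul_assoc, hpow, one_div, mul_inv]
  rw [show -((((n:ℝ) - 2)⁻¹ * (omegaSph n)⁻¹) * (((2:ℝ) - n) * ‖x - x₀‖ ^ ((1:ℝ) - n)))
      = (((n:ℝ) - 2) * (((n:ℝ) - 2)⁻¹ * (omegaSph n)⁻¹)) * ‖x - x₀‖ ^ ((1:ℝ) - n) from by ring,
    ← mul_assoc, mul_inv_cancel₀ hn2', one_mul]
end

section
/- Giraud's Lemma: let (M, d, μ) be a compact metric measure space of dimension-type n, meaning there is C₀ > 0 with μ(B(x,r)) ≤ C₀rⁿ for all x and r > 0, and suppose the diameter of M is finite. Let α, β ∈ (0, n) and let X, Y : M × M → ℝ be measurable with |X(x,y)| ≤ C_X·d(x,y)^{α-n} and |Y(x,y)| ≤ C_Y·d(x,y)^{β-n} for all x ≠ y. Then Z(x,y) := ∫_M X(x,z)Y(z,y) dμ(z) is well-defined for all x ≠ y, and there is a constant C = C(α, β, C₀, n, diam M) such that |Z(x,y)| ≤ C·C_X·C_Y·d(x,y)^{α+β-n} if α+β < n, |Z(x,y)| ≤ C·C_X·C_Y·(1 + |log d(x,y)|)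 if α+β = n, and |Z(x,y)| ≤ C·C_X·C_Y if α+β > n. -/
open MeasureTheory Real

lemma giraud_geom_tsum (a w : ℝ) (ha : 0 ≤ a) (hw0 : 0 ≤ w) (hw1 : w < 1) :
    ∑' k : ℕ, ENNReal.ofReal (a * w ^ k) ≤ ENNReal.ofReal (a / (1 - w)) := by
  have h1 : ∀ k : ℕ, ENNReal.ofReal (a * w ^ k) = ENNReal.ofReal a * (ENNReal.ofReal w) ^ k := by
    intro k; rw [ENNReal.ofReal_mul ha, ENNReal.ofReal_pow hw0]
  calc ∑' k : ℕ, ENNReal.ofReal (a * w ^ k)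
      = ENNReal.ofReal a * ∑' k : ℕ, (ENNReal.ofReal w) ^ k := by
        simp_rw [h1]; rw [ENNReal.tsum_mul_left]
    _ = ENNReal.ofReal a * (1 - ENNReal.ofReal w)⁻¹ := by rw [ENNReal.tsum_geometric]
    _ = ENNReal.ofReal (a / (1 - w)) := by
        rw [div_eq_mul_inv, ENNReal.ofReal_mul ha, ENNReal.ofReal_inv_of_pos (by linarith),
          ENNReal.ofReal_sub _ hw0, ENNReal.ofReal_one]
    _ ≤ ENNReal.ofReal (a / (1 - w)) := le_rfl

lemma giraud_pow_cast (m : ℕ) : ((1/2 : ℝ)) ^ m = (2:ℝ) ^ (-(m:ℝ)) := by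
  rw [Real.rpow_neg (by norm_num : (0:ℝ) ≤ 2), Real.rpow_natCast]
  simp [one_div, inv_pow]

lemma giraud_inner {M : Type*} [MetricSpace M] [MeasurableSpace M] [BorelSpace M]
    (μ : Measure M) (n C₀ : ℝ) (hC₀ : 0 < C₀)
    (hvol : ∀ (x : M) (r : ℝ), 0 < r → μ (Metric.ball x r) ≤ ENNReal.ofReal (C₀ * r ^ n))
    (γ : ℝ) (hγ0 : 0 < γ) (hγn : γ < n) (x : M) (r : ℝ) (hr : 0 < r) :
    ∫⁻ z in Metric.ball x r, ENNReal.ofReal (dist x z ^ (γ - n)) ∂μ ≤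
      ENNReal.ofReal (C₀ * 2 ^ (n - γ) / (1 - 2 ^ (-γ)) * r ^ γ) := by
  set f : M → ENNReal := fun z => ENNReal.ofReal (dist x z ^ (γ - n)) with hf
  set A : ℕ → Set M := fun k =>
    Metric.ball x (r * 2 ^ (-(k:ℝ))) \ Metric.ball x (r * 2 ^ (-((k:ℝ)+1))) with hA
  have hcover : Metric.ball x r ⊆ {x} ∪ ⋃ k, A k := by
    intro z hz
    rcases eq_or_ne z x with hzx | hzx
    · exact Or.inl hzx
    · right
      have hd0 : 0 < dist z x := dist_pos.2 hzx
      have hdr : dist z x < r := Metric.mem_ball.1 hz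
      have hex : ∃ k : ℕ, ¬ (dist z x < r * 2 ^ (-(k:ℝ))) := by
        obtain ⟨k, hk⟩ := exists_pow_lt_of_lt_one (div_pos hd0 hr) (by norm_num : (1/2:ℝ) < 1)
        rw [giraud_pow_cast] at hk
        refine ⟨k, not_lt.2 ?_⟩
        have := (lt_div_iff₀ hr).1 hk
        linarith [this]
      set K := Nat.find hex with hK
      have hKspec : ¬ (dist z x < r * 2 ^ (-(K:ℝ))) := Nat.find_spec hex
      have hK1 : K ≠ 0 := by
        intro h
        apply hKspec
        rw [h]
        simpa using hdr
      obtain ⟨k, hk⟩ := Nat.exists_eq_succ_of_ne_zero hK1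
      refine Set.mem_iUnion.2 ⟨k, ?_, ?_⟩
      · have hmin := Nat.find_min hex (show k < K by omega)
        exact Metric.mem_ball.2 (not_not.1 hmin)
      · intro hmem
        apply hKspec
        have : ((K:ℝ)) = (k:ℝ) + 1 := by rw [hk]; push_cast; ring
        rw [this]
        exact Metric.mem_ball.1 hmem
  have hAk : ∀ k : ℕ, ∫⁻ z in A k, f z ∂μ ≤
      ENNReal.ofReal ((C₀ * 2 ^ (n - γ) * r ^ γ) * ((2:ℝ) ^ (-γ)) ^ k) := by
    intro k
    have hpos1 : (0:ℝ) < r * 2 ^ (-((k:ℝ)+1)) := by positivity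
    have hpos0 : (0:ℝ) < r * 2 ^ (-(k:ℝ)) := by positivity
    calc ∫⁻ z in A k, f z ∂μ
        ≤ ∫⁻ _ in A k, ENNReal.ofReal ((r * 2 ^ (-((k:ℝ)+1))) ^ (γ - n)) ∂μ := by
          refine setLIntegral_mono' (measurableSet_ball.diff measurableSet_ball) fun z hz => ?_
          refine ENNReal.ofReal_le_ofReal ?_
          have h2 : r * 2 ^ (-((k:ℝ)+1)) ≤ dist x z := by
            rw [dist_comm]
            exact not_lt.1 fun h => hz.2 (Metric.mem_ball.2 h)
          exact Real.rpow_le_rpow_of_nonpos hpos1 h2 (by linarith)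
      _ = ENNReal.ofReal ((r * 2 ^ (-((k:ℝ)+1))) ^ (γ - n)) * μ (A k) := setLIntegral_const _ _
      _ ≤ ENNReal.ofReal ((r * 2 ^ (-((k:ℝ)+1))) ^ (γ - n)) *
            ENNReal.ofReal (C₀ * (r * 2 ^ (-(k:ℝ))) ^ n) := by
          gcongr
          exact (measure_mono Set.diff_subset).trans (hvol x _ hpos0)
      _ = ENNReal.ofReal ((r * 2 ^ (-((k:ℝ)+1))) ^ (γ - n) * (C₀ * (r * 2 ^ (-(k:ℝ))) ^ n)) := by
          rw [← ENNReal.ofReal_mul (Real.rpow_nonneg hpos1.le _)]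
      _ = ENNReal.ofReal ((C₀ * 2 ^ (n - γ) * r ^ γ) * ((2:ℝ) ^ (-γ)) ^ k) := by
          congr 1
          rw [← Real.rpow_natCast ((2:ℝ) ^ (-γ)) k, ← Real.rpow_mul (by norm_num : (0:ℝ) ≤ 2),
            Real.mul_rpow hr.le (Real.rpow_nonneg (by norm_num) _),
            Real.mul_rpow hr.le (Real.rpow_nonneg (by norm_num) _),
            ← Real.rpow_mul (by norm_num : (0:ℝ) ≤ 2),
            ← Real.rpow_mul (by norm_num : (0:ℝ) ≤ 2)]
          have e1 : r ^ (γ - n) * r ^ n = r ^ γ := by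
            rw [← Real.rpow_add hr]; congr 1; ring
          have e2 : (2:ℝ) ^ ((-((k:ℝ)+1))*(γ-n)) * 2 ^ ((-(k:ℝ))*n)
              = 2 ^ (n - γ) * 2 ^ (-γ * (k:ℝ)) := by
            rw [← Real.rpow_add (by norm_num : (0:ℝ) < 2),
              ← Real.rpow_add (by norm_num : (0:ℝ) < 2)]
            congr 1; ring
          calc r ^ (γ - n) * (2:ℝ) ^ ((-((k:ℝ)+1))*(γ-n)) * (C₀ * (r ^ n * 2 ^ ((-(k:ℝ))*n)))
              = C₀ * ((r ^ (γ - n) * r ^ n) * ((2:ℝ) ^ ((-((k:ℝ)+1))*(γ-n)) * 2 ^ ((-(k:ℝ))*n))) := by ring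
            _ = C₀ * (r ^ γ * (2 ^ (n - γ) * 2 ^ (-γ * (k:ℝ)))) := by rw [e1, e2]
            _ = C₀ * 2 ^ (n - γ) * r ^ γ * 2 ^ (-γ * (k:ℝ)) := by ring
  calc ∫⁻ z in Metric.ball x r, f z ∂μ
      ≤ ∫⁻ z in ({x} ∪ ⋃ k, A k), f z ∂μ := lintegral_mono_set hcover
    _ ≤ ∫⁻ z in {x}, f z ∂μ + ∫⁻ z in ⋃ k, A k, f z ∂μ := lintegral_union_le _ _ _
    _ ≤ 0 + ∑' k, ∫⁻ z in A k, f z ∂μ := by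
        gcongr
        · have h0 : f x = 0 := by
            simp only [hf, dist_self]
            rw [Real.zero_rpow (by linarith : γ - n ≠ 0)]
            simp
          rw [lintegral_singleton, h0, zero_mul]
        · exact lintegral_iUnion_le _ _
    _ ≤ ∑' k, ENNReal.ofReal ((C₀ * 2 ^ (n - γ) * r ^ γ) * ((2:ℝ) ^ (-γ)) ^ k) := by
        rw [zero_add]; exact ENNReal.tsum_le_tsum hAk
    _ ≤ ENNReal.ofReal ((C₀ * 2 ^ (n - γ) * r ^ γ) / (1 - 2 ^ (-γ))) := by
        refine giraud_geom_tsum _ _ (by positivity) (Real.rpow_nonneg (by norm_num) _) ?_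
        exact Real.rpow_lt_one_of_one_lt_of_neg one_lt_two (by linarith)
    _ = ENNReal.ofReal (C₀ * 2 ^ (n - γ) / (1 - 2 ^ (-γ)) * r ^ γ) := by
        congr 1; ring

lemma giraud_outer {M : Type*} [MetricSpace M] [MeasurableSpace M] [BorelSpace M]
    (μ : Measure M) (n C₀ : ℝ) (hC₀ : 0 < C₀)
    (hvol : ∀ (x : M) (r : ℝ), 0 < r → μ (Metric.ball x r) ≤ ENNReal.ofReal (C₀ * r ^ n))
    (δ : ℝ) (hδn : δ < n) (x : M) (r : ℝ) (hr : 0 < r) (N : ℕ)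
    (hdist : ∀ z : M, dist x z < r * 2 ^ (N:ℝ)) :
    ∫⁻ z in (Metric.ball x r)ᶜ, ENNReal.ofReal (dist x z ^ (δ - n)) ∂μ ≤
      ENNReal.ofReal (∑ k ∈ Finset.range N, C₀ * 2 ^ n * r ^ δ * ((2:ℝ) ^ δ) ^ k) := by
  set f : M → ENNReal := fun z => ENNReal.ofReal (dist x z ^ (δ - n)) with hf
  set B : ℕ → Set M := fun k =>
    Metric.ball x (r * 2 ^ ((k:ℝ)+1)) \ Metric.ball x (r * 2 ^ (k:ℝ)) with hB
  have hcover : (Metric.ball x r)ᶜ ⊆ ⋃ j : Fin N, B (j:ℕ) := by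
    intro z hz
    have hd : r ≤ dist z x := not_lt.1 fun h => hz (Metric.mem_ball.2 h)
    have hd0 : 0 < dist z x := lt_of_lt_of_le hr hd
    have hdr1 : 1 ≤ dist z x / r := (one_le_div hr).2 hd
    set t := Real.logb 2 (dist z x / r) with ht
    have ht0 : 0 ≤ t := Real.logb_nonneg one_lt_two hdr1
    set k := ⌊t⌋₊ with hkdef
    have h2t : (2:ℝ) ^ t = dist z x / r :=
      Real.rpow_logb (by norm_num) (by norm_num) (by positivity)
    have hlow : r * 2 ^ (k:ℝ) ≤ dist z x := by
      have : (2:ℝ) ^ (k:ℝ) ≤ 2 ^ t :=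
        Real.rpow_le_rpow_of_exponent_le one_le_two (Nat.floor_le ht0)
      rw [h2t] at this
      calc r * 2 ^ (k:ℝ) ≤ r * (dist z x / r) := by
            exact mul_le_mul_of_nonneg_left this hr.le
        _ = dist z x := by field_simp
    have hhigh : dist z x < r * 2 ^ ((k:ℝ)+1) := by
      have : (2:ℝ) ^ t < 2 ^ ((k:ℝ)+1) := by
        refine Real.rpow_lt_rpow_of_exponent_lt one_lt_two ?_
        exact_mod_cast Nat.lt_floor_add_one t
      rw [h2t] at this
      rw [div_lt_iff₀ hr] at this
      linarith [this]
    have hkN : k < N := by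
      have h1 : r * 2 ^ (k:ℝ) < r * 2 ^ (N:ℝ) := by
        calc r * 2 ^ (k:ℝ) ≤ dist z x := hlow
          _ < r * 2 ^ (N:ℝ) := by rw [dist_comm]; exact hdist z
      have h2 : (2:ℝ) ^ (k:ℝ) < 2 ^ (N:ℝ) := lt_of_mul_lt_mul_left h1 hr.le
      have := (Real.rpow_lt_rpow_left_iff one_lt_two).1 h2
      exact_mod_cast this
    refine Set.mem_iUnion.2 ⟨⟨k, hkN⟩, ?_, ?_⟩
    · exact Metric.mem_ball.2 hhigh
    · exact fun hmem => absurd (Metric.mem_ball.1 hmem) (not_lt.2 hlow)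
  have hBk : ∀ k : ℕ, ∫⁻ z in B k, f z ∂μ ≤
      ENNReal.ofReal (C₀ * 2 ^ n * r ^ δ * ((2:ℝ) ^ δ) ^ k) := by
    intro k
    have hpos0 : (0:ℝ) < r * 2 ^ (k:ℝ) := by positivity
    have hpos1 : (0:ℝ) < r * 2 ^ ((k:ℝ)+1) := by positivity
    calc ∫⁻ z in B k, f z ∂μ
        ≤ ∫⁻ _ in B k, ENNReal.ofReal ((r * 2 ^ (k:ℝ)) ^ (δ - n)) ∂μ := by
          refine setLIntegral_mono' (measurableSet_ball.diff measurableSet_ball) fun z hz => ?_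
          refine ENNReal.ofReal_le_ofReal ?_
          have h2 : r * 2 ^ (k:ℝ) ≤ dist x z := by
            rw [dist_comm]
            exact not_lt.1 fun h => hz.2 (Metric.mem_ball.2 h)
          exact Real.rpow_le_rpow_of_nonpos hpos0 h2 (by linarith)
      _ = ENNReal.ofReal ((r * 2 ^ (k:ℝ)) ^ (δ - n)) * μ (B k) := setLIntegral_const _ _
      _ ≤ ENNReal.ofReal ((r * 2 ^ (k:ℝ)) ^ (δ - n)) *
            ENNReal.ofReal (C₀ * (r * 2 ^ ((k:ℝ)+1)) ^ n) := by
          gcongr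
          exact (measure_mono Set.diff_subset).trans (hvol x _ hpos1)
      _ = ENNReal.ofReal ((r * 2 ^ (k:ℝ)) ^ (δ - n) * (C₀ * (r * 2 ^ ((k:ℝ)+1)) ^ n)) := by
          rw [← ENNReal.ofReal_mul (Real.rpow_nonneg hpos0.le _)]
      _ = ENNReal.ofReal (C₀ * 2 ^ n * r ^ δ * ((2:ℝ) ^ δ) ^ k) := by
          congr 1
          rw [← Real.rpow_natCast ((2:ℝ) ^ δ) k, ← Real.rpow_mul (by norm_num : (0:ℝ) ≤ 2),
            Real.mul_rpow hr.le (Real.rpow_nonneg (by norm_num) _),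
            Real.mul_rpow hr.le (Real.rpow_nonneg (by norm_num) _),
            ← Real.rpow_mul (by norm_num : (0:ℝ) ≤ 2),
            ← Real.rpow_mul (by norm_num : (0:ℝ) ≤ 2)]
          have e1 : r ^ (δ - n) * r ^ n = r ^ δ := by
            rw [← Real.rpow_add hr]; congr 1; ring
          have e2 : (2:ℝ) ^ ((k:ℝ)*(δ-n)) * 2 ^ (((k:ℝ)+1)*n) = 2 ^ n * 2 ^ (δ * (k:ℝ)) := by
            rw [← Real.rpow_add (by norm_num : (0:ℝ) < 2),
              ← Real.rpow_add (by norm_num : (0:ℝ) < 2)]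
            congr 1; ring
          calc r ^ (δ - n) * (2:ℝ) ^ ((k:ℝ)*(δ-n)) * (C₀ * (r ^ n * 2 ^ (((k:ℝ)+1)*n)))
              = C₀ * ((r ^ (δ - n) * r ^ n) * ((2:ℝ) ^ ((k:ℝ)*(δ-n)) * 2 ^ (((k:ℝ)+1)*n))) := by
                ring
            _ = C₀ * (r ^ δ * (2 ^ n * 2 ^ (δ * (k:ℝ)))) := by rw [e1, e2]
            _ = C₀ * 2 ^ n * r ^ δ * 2 ^ (δ * (k:ℝ)) := by ring
  calc ∫⁻ z in (Metric.ball x r)ᶜ, f z ∂μ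
      ≤ ∫⁻ z in ⋃ j : Fin N, B (j:ℕ), f z ∂μ := lintegral_mono_set hcover
    _ ≤ ∑' j : Fin N, ∫⁻ z in B (j:ℕ), f z ∂μ := lintegral_iUnion_le _ _
    _ ≤ ∑' j : Fin N, ENNReal.ofReal (C₀ * 2 ^ n * r ^ δ * ((2:ℝ) ^ δ) ^ (j:ℕ)) :=
        ENNReal.tsum_le_tsum fun j => hBk _
    _ = ∑ j ∈ Finset.range N, ENNReal.ofReal (C₀ * 2 ^ n * r ^ δ * ((2:ℝ) ^ δ) ^ j) := by
        rw [tsum_fintype]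
        exact Fin.sum_univ_eq_sum_range (fun j => ENNReal.ofReal (C₀ * 2 ^ n * r ^ δ * ((2:ℝ) ^ δ) ^ j)) N
    _ = ENNReal.ofReal (∑ k ∈ Finset.range N, C₀ * 2 ^ n * r ^ δ * ((2:ℝ) ^ δ) ^ k) := by
        rw [ENNReal.ofReal_sum_of_nonneg]
        intro i _
        positivity

lemma giraud_half {M : Type*} [MetricSpace M] [MeasurableSpace M] [BorelSpace M]
    (μ : Measure M) (n C₀ : ℝ) (hC₀ : 0 < C₀)
    (hvol : ∀ (x : M) (r : ℝ), 0 < r → μ (Metric.ball x r) ≤ ENNReal.ofReal (C₀ * r ^ n))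
    (α β : ℝ) (hα : α ∈ Set.Ioo 0 n) (hβ : β ∈ Set.Ioo 0 n)
    (x y : M) (hxy : x ≠ y) (N : ℕ)
    (hN : ∀ z : M, dist x z < dist x y * 2 ^ (N:ℝ)) :
    ∫⁻ z in {z | dist x z ≤ dist z y},
        ENNReal.ofReal (dist x z ^ (α - n) * dist z y ^ (β - n)) ∂μ ≤
      ENNReal.ofReal (C₀ * 2 ^ (n - α) / (1 - 2 ^ (-α)) * ((dist x y / 2) ^ (β - n) * dist x y ^ α)
        + ∑ k ∈ Finset.range N,
            C₀ * 2 ^ n * dist x y ^ (α + β - n) * ((2:ℝ) ^ (α + β - n)) ^ k) := by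
  set ρ := dist x y with hρdef
  have hρ : 0 < ρ := dist_pos.2 hxy
  set S : Set M := {z | dist x z ≤ dist z y} with hS
  have hhalf : ∀ z ∈ S, ρ / 2 ≤ dist z y := by
    intro z hz
    have h1 : ρ ≤ dist x z + dist z y := dist_triangle x z y
    have h2 : dist x z ≤ dist z y := hz
    linarith
  have hsub : S ⊆ (S ∩ Metric.ball x ρ) ∪ (S \ Metric.ball x ρ) := by
    intro z hz
    by_cases h : z ∈ Metric.ball x ρ
    · exact Or.inl ⟨hz, h⟩
    · exact Or.inr ⟨hz, h⟩
  have hpartA : ∫⁻ z in S ∩ Metric.ball x ρ,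
      ENNReal.ofReal (dist x z ^ (α - n) * dist z y ^ (β - n)) ∂μ ≤
      ENNReal.ofReal (C₀ * 2 ^ (n - α) / (1 - 2 ^ (-α)) *
        ((ρ / 2) ^ (β - n) * ρ ^ α)) := by
    calc ∫⁻ z in S ∩ Metric.ball x ρ,
          ENNReal.ofReal (dist x z ^ (α - n) * dist z y ^ (β - n)) ∂μ
        ≤ ∫⁻ z in S ∩ Metric.ball x ρ,
            ENNReal.ofReal ((ρ / 2) ^ (β - n)) * ENNReal.ofReal (dist x z ^ (α - n)) ∂μ := by
          refine setLIntegral_mono' ((measurableSet_le (by fun_prop) (by fun_prop)).inter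
            measurableSet_ball) fun z hz => ?_
          rw [← ENNReal.ofReal_mul (Real.rpow_nonneg (by positivity) _)]
          refine ENNReal.ofReal_le_ofReal ?_
          rw [mul_comm ((ρ / 2) ^ (β - n))]
          refine mul_le_mul_of_nonneg_left ?_ (Real.rpow_nonneg dist_nonneg _)
          exact Real.rpow_le_rpow_of_nonpos (by positivity) (hhalf z hz.1)
            (by rcases hβ with ⟨h1, h2⟩; linarith)
      _ = ENNReal.ofReal ((ρ / 2) ^ (β - n)) *
            ∫⁻ z in S ∩ Metric.ball x ρ, ENNReal.ofReal (dist x z ^ (α - n)) ∂μ :=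
          lintegral_const_mul' _ _ ENNReal.ofReal_ne_top
      _ ≤ ENNReal.ofReal ((ρ / 2) ^ (β - n)) *
            ∫⁻ z in Metric.ball x ρ, ENNReal.ofReal (dist x z ^ (α - n)) ∂μ := by
          gcongr
          exact Set.inter_subset_right
      _ ≤ ENNReal.ofReal ((ρ / 2) ^ (β - n)) *
            ENNReal.ofReal (C₀ * 2 ^ (n - α) / (1 - 2 ^ (-α)) * ρ ^ α) := by
          gcongr
          exact giraud_inner μ n C₀ hC₀ hvol α hα.1 hα.2 x ρ hρ
      _ = ENNReal.ofReal (C₀ * 2 ^ (n - α) / (1 - 2 ^ (-α)) * ((ρ / 2) ^ (β - n) * ρ ^ α)) := by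
          rw [← ENNReal.ofReal_mul (Real.rpow_nonneg (by positivity) _)]
          congr 1; ring
  have hpartB : ∫⁻ z in S \ Metric.ball x ρ,
      ENNReal.ofReal (dist x z ^ (α - n) * dist z y ^ (β - n)) ∂μ ≤
      ENNReal.ofReal (∑ k ∈ Finset.range N,
        C₀ * 2 ^ n * ρ ^ (α + β - n) * ((2:ℝ) ^ (α + β - n)) ^ k) := by
    calc ∫⁻ z in S \ Metric.ball x ρ,
          ENNReal.ofReal (dist x z ^ (α - n) * dist z y ^ (β - n)) ∂μ
        ≤ ∫⁻ z in S \ Metric.ball x ρ,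
            ENNReal.ofReal (dist x z ^ ((α + β - n) - n)) ∂μ := by
          refine setLIntegral_mono' ((measurableSet_le (by fun_prop) (by fun_prop)).diff
            measurableSet_ball) fun z hz => ?_
          refine ENNReal.ofReal_le_ofReal ?_
          have hd : ρ ≤ dist x z := by
            rw [dist_comm]
            exact not_lt.1 fun h => hz.2 (Metric.mem_ball.2 h)
          have hd0 : 0 < dist x z := lt_of_lt_of_le hρ hd
          have h1 : dist z y ^ (β - n) ≤ dist x z ^ (β - n) :=
            Real.rpow_le_rpow_of_nonpos hd0 hz.1
              (by rcases hβ with ⟨h1, h2⟩; linarith)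
          calc dist x z ^ (α - n) * dist z y ^ (β - n)
              ≤ dist x z ^ (α - n) * dist x z ^ (β - n) :=
                mul_le_mul_of_nonneg_left h1 (Real.rpow_nonneg dist_nonneg _)
            _ = dist x z ^ ((α + β - n) - n) := by
                rw [← Real.rpow_add hd0]; congr 1; ring
      _ ≤ ∫⁻ z in (Metric.ball x ρ)ᶜ, ENNReal.ofReal (dist x z ^ ((α + β - n) - n)) ∂μ :=
          lintegral_mono_set fun z hz => hz.2
      _ ≤ ENNReal.ofReal (∑ k ∈ Finset.range N,
            C₀ * 2 ^ n * ρ ^ (α + β - n) * ((2:ℝ) ^ (α + β - n)) ^ k) := by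
          refine giraud_outer μ n C₀ hC₀ hvol (α + β - n)
            (by rcases hα with ⟨h1, h2⟩; rcases hβ with ⟨h3, h4⟩; linarith) x ρ hρ N hN
  calc ∫⁻ z in S, ENNReal.ofReal (dist x z ^ (α - n) * dist z y ^ (β - n)) ∂μ
      ≤ ∫⁻ z in (S ∩ Metric.ball x ρ) ∪ (S \ Metric.ball x ρ),
          ENNReal.ofReal (dist x z ^ (α - n) * dist z y ^ (β - n)) ∂μ :=
        lintegral_mono_set hsub
    _ ≤ (∫⁻ z in S ∩ Metric.ball x ρ,
          ENNReal.ofReal (dist x z ^ (α - n) * dist z y ^ (β - n)) ∂μ) +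
        ∫⁻ z in S \ Metric.ball x ρ,
          ENNReal.ofReal (dist x z ^ (α - n) * dist z y ^ (β - n)) ∂μ :=
        lintegral_union_le _ _ _
    _ ≤ ENNReal.ofReal (C₀ * 2 ^ (n - α) / (1 - 2 ^ (-α)) * ((ρ / 2) ^ (β - n) * ρ ^ α)) +
        ENNReal.ofReal (∑ k ∈ Finset.range N,
          C₀ * 2 ^ n * ρ ^ (α + β - n) * ((2:ℝ) ^ (α + β - n)) ^ k) :=
        add_le_add hpartA hpartB
    _ = _ := by
        have hw : (0:ℝ) < 1 - 2 ^ (-α) := by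
          have := Real.rpow_lt_one_of_one_lt_of_neg one_lt_two (neg_neg_of_pos hα.1)
          linarith
        rw [← ENNReal.ofReal_add
          (mul_nonneg (div_nonneg (by positivity) hw.le) (by positivity))
          (Finset.sum_nonneg fun i _ => by positivity)]

/-- Giraud's Lemma on a compact metric measure space of dimension-type `n`:
if `|X(x,y)| ≤ C_X d(x,y)^{α-n}` and `|Y(x,y)| ≤ C_Y d(x,y)^{β-n}` with
`α, β ∈ (0,n)`, then `Z(x,y) = ∫ X(x,z) Y(z,y) dμ(z)` is well-defined for `x ≠ y` and
satisfies `|Z(x,y)| ≤ C C_X C_Y d(x,y)^{α+β-n}` if `α+β < n`,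
`≤ C C_X C_Y (1+|log d(x,y)|)` if `α+β = n`, and `≤ C C_X C_Y` if `α+β > n`. -/
theorem giraud_lemma {M : Type*} [MetricSpace M] [CompactSpace M]
    [MeasurableSpace M] [BorelSpace M] (μ : Measure M)
    (n : ℝ) (hn : 0 < n) (C₀ : ℝ) (hC₀ : 0 < C₀)
    (hvol : ∀ (x : M) (r : ℝ), 0 < r →
      μ (Metric.ball x r) ≤ ENNReal.ofReal (C₀ * r ^ n))
    (α β : ℝ) (hα : α ∈ Set.Ioo 0 n) (hβ : β ∈ Set.Ioo 0 n)
    (X Y : M → M → ℝ)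
    (hX : Measurable (Function.uncurry X)) (hY : Measurable (Function.uncurry Y))
    (C_X C_Y : ℝ)
    (hXb : ∀ x y : M, x ≠ y → |X x y| ≤ C_X * dist x y ^ (α - n))
    (hYb : ∀ x y : M, x ≠ y → |Y x y| ≤ C_Y * dist x y ^ (β - n)) :
    (∀ x y : M, x ≠ y → Integrable (fun z => X x z * Y z y) μ) ∧
    ∃ C : ℝ, 0 < C ∧ ∀ x y : M, x ≠ y →
      |∫ z, X x z * Y z y ∂μ| ≤ C * C_X * C_Y *
        (if α + β < n then dist x y ^ (α + β - n)
         else if α + β = n then 1 + |Real.log (dist x y)|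
         else 1) := by
  by_cases hM : ∃ p : M × M, p.1 ≠ p.2
  case neg =>
    push_neg at hM
    exact ⟨fun x y hxy => absurd (hM (x, y)) hxy,
      1, one_pos, fun x y hxy => absurd (hM (x, y)) hxy⟩
  obtain ⟨⟨x₀, y₀⟩, hx₀⟩ := hM
  have hCX : 0 ≤ C_X := by
    have h1 := (abs_nonneg (X x₀ y₀)).trans (hXb x₀ y₀ hx₀)
    have h2 : 0 < dist x₀ y₀ ^ (α - n) := Real.rpow_pos_of_pos (dist_pos.2 hx₀) _
    exact le_of_not_gt fun hc => absurd h1 (not_le.2 (mul_neg_of_neg_of_pos hc h2))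
  have hCY : 0 ≤ C_Y := by
    have h1 := (abs_nonneg (Y x₀ y₀)).trans (hYb x₀ y₀ hx₀)
    have h2 : 0 < dist x₀ y₀ ^ (β - n) := Real.rpow_pos_of_pos (dist_pos.2 hx₀) _
    exact le_of_not_gt fun hc => absurd h1 (not_le.2 (mul_neg_of_neg_of_pos hc h2))
  obtain ⟨hα1, hα2⟩ := hα
  obtain ⟨hβ1, hβ2⟩ := hβ
  have hwα : (0:ℝ) < 1 - 2 ^ (-α) := by
    have := Real.rpow_lt_one_of_one_lt_of_neg one_lt_two (neg_neg_of_pos hα1); linarith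
  have hwβ : (0:ℝ) < 1 - 2 ^ (-β) := by
    have := Real.rpow_lt_one_of_one_lt_of_neg one_lt_two (neg_neg_of_pos hβ1); linarith
  set D := Metric.diam (Set.univ : Set M) with hDdef
  have hDb : ∀ z w : M, dist z w ≤ D := fun z w =>
    Metric.dist_le_diam_of_mem isCompact_univ.isBounded trivial trivial
  have hD0 : 0 ≤ D := Metric.diam_nonneg
  have hlog2 : 0 < Real.log 2 := Real.log_pos one_lt_two
  have hlogD : 0 ≤ Real.log (D + 1) := Real.log_nonneg (by linarith)
  set Nf : M → M → ℕ := fun x y => ⌊Real.logb 2 ((D + 1) / dist x y)⌋₊ + 1 with hNfdef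
  -- properties of Nf
  have hNprop : ∀ x y : M, x ≠ y →
      (∀ w z : M, dist w z < dist x y * 2 ^ ((Nf x y : ℕ):ℝ)) ∧
      dist x y * 2 ^ ((Nf x y : ℕ):ℝ) ≤ 2 * (D + 1) ∧
      ((Nf x y : ℕ):ℝ) ≤ (Real.log (D + 1) / Real.log 2 + 1 / Real.log 2 + 1) *
        (1 + |Real.log (dist x y)|) := by
    intro x y hxy
    have hρ : 0 < dist x y := dist_pos.2 hxy
    have hρD : dist x y ≤ D := hDb x y
    set ρ := dist x y with hρdef
    set t := Real.logb 2 ((D + 1) / ρ) with ht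
    have hfrac1 : 1 ≤ (D + 1) / ρ := (one_le_div hρ).2 (by linarith)
    have ht0 : 0 ≤ t := Real.logb_nonneg one_lt_two hfrac1
    have h2t : (2:ℝ) ^ t = (D + 1) / ρ :=
      Real.rpow_logb two_pos (by norm_num) (by positivity)
    have hNt : ((Nf x y : ℕ):ℝ) = (⌊t⌋₊ : ℝ) + 1 := by
      simp only [hNfdef, ← hρdef, ← ht]; push_cast; ring
    have htN : t < ((Nf x y : ℕ):ℝ) := by rw [hNt]; exact Nat.lt_floor_add_one t
    have h2N : (D + 1) / ρ < 2 ^ ((Nf x y : ℕ):ℝ) := by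
      rw [← h2t]; exact Real.rpow_lt_rpow_of_exponent_lt one_lt_two htN
    have hDN : D + 1 < ρ * 2 ^ ((Nf x y : ℕ):ℝ) := by
      have := (div_lt_iff₀ hρ).1 h2N
      linarith [this]
    refine ⟨fun w z => ?_, ?_, ?_⟩
    · calc dist w z ≤ D := hDb w z
        _ < ρ * 2 ^ ((Nf x y : ℕ):ℝ) := by linarith
    · have h1 : (2:ℝ) ^ ((Nf x y : ℕ):ℝ) ≤ 2 * 2 ^ t := by
        rw [hNt, Real.rpow_add two_pos, Real.rpow_one]
        have h2 : (2:ℝ) ^ ((⌊t⌋₊ : ℕ):ℝ) ≤ 2 ^ t :=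
          Real.rpow_le_rpow_of_exponent_le one_le_two (Nat.floor_le ht0)
        push_cast at h2 ⊢
        linarith
      calc ρ * 2 ^ ((Nf x y : ℕ):ℝ) ≤ ρ * (2 * 2 ^ t) :=
            mul_le_mul_of_nonneg_left h1 hρ.le
        _ = 2 * (D + 1) := by rw [h2t]; field_simp
    · have htval : t = (Real.log (D + 1) - Real.log ρ) / Real.log 2 := by
        rw [ht, Real.logb, Real.log_div (by positivity) hρ.ne']
      have hL : 0 ≤ |Real.log ρ| := abs_nonneg _
      have ht_le : t ≤ Real.log (D + 1) / Real.log 2 + |Real.log ρ| / Real.log 2 := by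
        rw [htval, ← add_div]
        gcongr
        · linarith [neg_abs_le (Real.log ρ)]
      have hN_le : ((Nf x y : ℕ):ℝ) ≤ t + 1 := by
        rw [hNt]; have := Nat.floor_le ht0; linarith
      set a := Real.log (D + 1) / Real.log 2 with hadef
      set b := 1 / Real.log 2 with hbdef
      have ha : 0 ≤ a := div_nonneg hlogD hlog2.le
      have hb : 0 < b := by rw [hbdef]; positivity
      have ht_le' : t ≤ a + b * |Real.log ρ| := by
        have hbl : |Real.log ρ| / Real.log 2 = b * |Real.log ρ| := by rw [hbdef]; ring
        rw [hbl] at ht_le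
        linarith
      have hexp : (a + b + 1) * (1 + |Real.log ρ|) =
          (a + b * |Real.log ρ| + 1) + (a * |Real.log ρ| + b + |Real.log ρ|) := by ring
      have h1 : 0 ≤ a * |Real.log ρ| := mul_nonneg ha hL
      linarith
  -- vanishing of points
  have hsing : ∀ p : M, μ {p} = 0 := by
    intro p
    refine le_antisymm ?_ zero_le
    refine ENNReal.le_of_forall_pos_le_add fun ε hε _ => ?_
    rw [zero_add]
    set r := ((ε:ℝ) / C₀) ^ (n⁻¹) with hr
    have hεR : (0:ℝ) < ε := hε
    have hrpos : 0 < r := Real.rpow_pos_of_pos (div_pos hεR hC₀) _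
    have h1 : μ {p} ≤ ENNReal.ofReal (C₀ * r ^ n) := by
      refine (measure_mono ?_).trans (hvol p r hrpos)
      intro q hq
      rw [Set.mem_singleton_iff] at hq
      subst hq
      simpa using hrpos
    have h2 : C₀ * r ^ n = (ε:ℝ) := by
      rw [hr, ← Real.rpow_mul (div_pos hεR hC₀).le, inv_mul_cancel₀ hn.ne', Real.rpow_one]
      field_simp
    rw [h2] at h1
    exact h1.trans_eq (ENNReal.ofReal_coe_nnreal)
  -- nonnegativity helpers
  have hterm_nn : ∀ (ρ : ℝ) (k : ℕ), 0 ≤ ρ →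
      0 ≤ C₀ * 2 ^ n * ρ ^ (α + β - n) * ((2:ℝ) ^ (α + β - n)) ^ k := by
    intro ρ k hρ
    refine mul_nonneg (mul_nonneg (mul_nonneg hC₀.le (Real.rpow_nonneg (by norm_num) _))
      (Real.rpow_nonneg hρ _)) (pow_nonneg (Real.rpow_nonneg (by norm_num) _) _)
  have hA1_nn : ∀ x y : M,
      0 ≤ C₀ * 2 ^ (n - α) / (1 - 2 ^ (-α)) * ((dist x y / 2) ^ (β - n) * dist x y ^ α) := by
    intro x y
    exact mul_nonneg (div_nonneg (mul_nonneg hC₀.le (Real.rpow_nonneg (by norm_num) _)) hwα.le)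
      (mul_nonneg (Real.rpow_nonneg (by positivity) _) (Real.rpow_nonneg dist_nonneg _))
  have hA2_nn : ∀ x y : M,
      0 ≤ C₀ * 2 ^ (n - β) / (1 - 2 ^ (-β)) * ((dist x y / 2) ^ (α - n) * dist x y ^ β) := by
    intro x y
    exact mul_nonneg (div_nonneg (mul_nonneg hC₀.le (Real.rpow_nonneg (by norm_num) _)) hwβ.le)
      (mul_nonneg (Real.rpow_nonneg (by positivity) _) (Real.rpow_nonneg dist_nonneg _))
  set P : M → M → ℝ := fun x y =>
    C₀ * 2 ^ (n - α) / (1 - 2 ^ (-α)) * ((dist x y / 2) ^ (β - n) * dist x y ^ α)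
      + ∑ k ∈ Finset.range (Nf x y),
          C₀ * 2 ^ n * dist x y ^ (α + β - n) * ((2:ℝ) ^ (α + β - n)) ^ k
      + (C₀ * 2 ^ (n - β) / (1 - 2 ^ (-β)) * ((dist x y / 2) ^ (α - n) * dist x y ^ β)
      + ∑ k ∈ Finset.range (Nf x y),
          C₀ * 2 ^ n * dist x y ^ (α + β - n) * ((2:ℝ) ^ (α + β - n)) ^ k) with hPdef
  have hP_nn : ∀ x y : M, 0 ≤ P x y := by
    intro x y
    have h1 := hA1_nn x y
    have h2 := hA2_nn x y
    have h3 : 0 ≤ ∑ k ∈ Finset.range (Nf x y),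
        C₀ * 2 ^ n * dist x y ^ (α + β - n) * ((2:ℝ) ^ (α + β - n)) ^ k :=
      Finset.sum_nonneg fun k _ => hterm_nn (dist x y) k dist_nonneg
    simp only [hPdef]
    linarith
  -- main per-pair estimate
  have hmain : ∀ x y : M, x ≠ y → Integrable (fun z => X x z * Y z y) μ ∧
      |∫ z, X x z * Y z y ∂μ| ≤ C_X * C_Y * P x y := by
    intro x y hxy
    have hρ : 0 < dist x y := dist_pos.2 hxy
    have hI : (∫⁻ z, ENNReal.ofReal (dist x z ^ (α - n) * dist z y ^ (β - n)) ∂μ) ≤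
        ENNReal.ofReal (P x y) := by
      have hh1 := giraud_half μ n C₀ hC₀ hvol α β ⟨hα1, hα2⟩ ⟨hβ1, hβ2⟩ x y hxy (Nf x y)
        (fun z => (hNprop x y hxy).1 x z)
      have hh2 := giraud_half μ n C₀ hC₀ hvol β α ⟨hβ1, hβ2⟩ ⟨hα1, hα2⟩ y x hxy.symm (Nf x y)
        (fun z => by rw [dist_comm y x]; exact (hNprop x y hxy).1 y z)
      rw [dist_comm y x, show β + α - n = α + β - n from by ring] at hh2
      have hstep2 : ∫⁻ z in {z | dist x z ≤ dist z y}ᶜ,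
          ENNReal.ofReal (dist x z ^ (α - n) * dist z y ^ (β - n)) ∂μ ≤
          ENNReal.ofReal (C₀ * 2 ^ (n - β) / (1 - 2 ^ (-β)) *
              ((dist x y / 2) ^ (α - n) * dist x y ^ β)
            + ∑ k ∈ Finset.range (Nf x y),
              C₀ * 2 ^ n * dist x y ^ (α + β - n) * ((2:ℝ) ^ (α + β - n)) ^ k) := by
        calc ∫⁻ z in {z | dist x z ≤ dist z y}ᶜ,
              ENNReal.ofReal (dist x z ^ (α - n) * dist z y ^ (β - n)) ∂μ
            = ∫⁻ z in {z | dist x z ≤ dist z y}ᶜ,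
              ENNReal.ofReal (dist y z ^ (β - n) * dist z x ^ (α - n)) ∂μ :=
              lintegral_congr fun z => by rw [dist_comm x z, dist_comm z y, mul_comm]
          _ ≤ ∫⁻ z in {z | dist y z ≤ dist z x},
              ENNReal.ofReal (dist y z ^ (β - n) * dist z x ^ (α - n)) ∂μ := by
              refine lintegral_mono_set fun z hz => ?_
              have h1 : dist z y < dist x z := not_le.1 hz
              show dist y z ≤ dist z x
              rw [dist_comm y z, dist_comm z x]
              exact h1.le
          _ ≤ _ := hh2
      calc (∫⁻ z, ENNReal.ofReal (dist x z ^ (α - n) * dist z y ^ (β - n)) ∂μ)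
          = ∫⁻ z in Set.univ, ENNReal.ofReal (dist x z ^ (α - n) * dist z y ^ (β - n)) ∂μ :=
            (setLIntegral_univ _).symm
        _ ≤ ∫⁻ z in {z | dist x z ≤ dist z y} ∪ {z | dist x z ≤ dist z y}ᶜ,
              ENNReal.ofReal (dist x z ^ (α - n) * dist z y ^ (β - n)) ∂μ :=
            lintegral_mono_set (by rw [Set.union_compl_self])
        _ ≤ _ + _ := lintegral_union_le _ _ _
        _ ≤ _ := add_le_add hh1 hstep2
        _ = ENNReal.ofReal (P x y) := by
            have h1 : 0 ≤ C₀ * 2 ^ (n - α) / (1 - 2 ^ (-α)) *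
                ((dist x y / 2) ^ (β - n) * dist x y ^ α) +
                ∑ k ∈ Finset.range (Nf x y),
                  C₀ * 2 ^ n * dist x y ^ (α + β - n) * ((2:ℝ) ^ (α + β - n)) ^ k :=
              add_nonneg (hA1_nn x y)
                (Finset.sum_nonneg fun k _ => hterm_nn (dist x y) k dist_nonneg)
            have h2 : 0 ≤ C₀ * 2 ^ (n - β) / (1 - 2 ^ (-β)) *
                ((dist x y / 2) ^ (α - n) * dist x y ^ β) +
                ∑ k ∈ Finset.range (Nf x y),
                  C₀ * 2 ^ n * dist x y ^ (α + β - n) * ((2:ℝ) ^ (α + β - n)) ^ k :=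
              add_nonneg (hA2_nn x y)
                (Finset.sum_nonneg fun k _ => hterm_nn (dist x y) k dist_nonneg)
            simp only [hPdef]
            rw [ENNReal.ofReal_add h1 h2]
    have hfm : Measurable fun z => X x z * Y z y :=
      (hX.comp measurable_prodMk_left).mul (hY.comp measurable_prodMk_right)
    have habs : ∀ᵐ z ∂μ, ‖X x z * Y z y‖ ≤
        C_X * C_Y * (dist x z ^ (α - n) * dist z y ^ (β - n)) := by
      have hae : ∀ᵐ z ∂μ, z ∉ ({x} ∪ {y} : Set M) :=
        measure_eq_zero_iff_ae_notMem.1 (measure_union_null (hsing x) (hsing y))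
      filter_upwards [hae] with z hz
      have hzx : x ≠ z := fun h => hz (Or.inl (by simp [← h]))
      have hzy : z ≠ y := fun h => hz (Or.inr (by simp [h]))
      rw [Real.norm_eq_abs, abs_mul]
      calc |X x z| * |Y z y| ≤ (C_X * dist x z ^ (α - n)) * (C_Y * dist z y ^ (β - n)) :=
            mul_le_mul (hXb x z hzx) (hYb z y hzy) (abs_nonneg _)
              (mul_nonneg hCX (Real.rpow_nonneg dist_nonneg _))
        _ = C_X * C_Y * (dist x z ^ (α - n) * dist z y ^ (β - n)) := by ring
    have hfin : (∫⁻ z, ENNReal.ofReal ‖X x z * Y z y‖ ∂μ) ≤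
        ENNReal.ofReal (C_X * C_Y) * ENNReal.ofReal (P x y) := by
      calc (∫⁻ z, ENNReal.ofReal ‖X x z * Y z y‖ ∂μ)
          ≤ ∫⁻ z, ENNReal.ofReal (C_X * C_Y) *
              ENNReal.ofReal (dist x z ^ (α - n) * dist z y ^ (β - n)) ∂μ := by
            refine lintegral_mono_ae ?_
            filter_upwards [habs] with z hz
            rw [← ENNReal.ofReal_mul (mul_nonneg hCX hCY)]
            exact ENNReal.ofReal_le_ofReal hz
        _ = ENNReal.ofReal (C_X * C_Y) *
              ∫⁻ z, ENNReal.ofReal (dist x z ^ (α - n) * dist z y ^ (β - n)) ∂μ :=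
            lintegral_const_mul' _ _ ENNReal.ofReal_ne_top
        _ ≤ _ := mul_le_mul_right hI _
    have hint : Integrable (fun z => X x z * Y z y) μ := by
      refine ⟨hfm.aestronglyMeasurable, ?_⟩
      rw [hasFiniteIntegral_iff_norm]
      exact lt_of_le_of_lt hfin
        (ENNReal.mul_lt_top ENNReal.ofReal_lt_top ENNReal.ofReal_lt_top)
    refine ⟨hint, ?_⟩
    calc |∫ z, X x z * Y z y ∂μ|
        ≤ (∫⁻ z, ENNReal.ofReal ‖X x z * Y z y‖ ∂μ).toReal := by
          rw [← Real.norm_eq_abs]; exact norm_integral_le_lintegral_norm _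
      _ ≤ (ENNReal.ofReal (C_X * C_Y) * ENNReal.ofReal (P x y)).toReal :=
          ENNReal.toReal_mono
            (ENNReal.mul_ne_top ENNReal.ofReal_ne_top ENNReal.ofReal_ne_top) hfin
      _ = C_X * C_Y * P x y := by
          rw [← ENNReal.ofReal_mul (mul_nonneg hCX hCY),
            ENNReal.toReal_ofReal (mul_nonneg (mul_nonneg hCX hCY) (hP_nn x y))]
  refine ⟨fun x y hxy => (hmain x y hxy).1, ?_⟩
  have heqd : ∀ (x y : M), x ≠ y → ∀ a b : ℝ,
      (dist x y / 2) ^ (b - n) * dist x y ^ a = 2 ^ (n - b) * dist x y ^ (a + b - n) := by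
    intro x y hxy a b
    have hρ : 0 < dist x y := dist_pos.2 hxy
    rw [Real.div_rpow hρ.le (by norm_num : (0:ℝ) ≤ 2), div_mul_eq_mul_div, ← Real.rpow_add hρ,
      show b - n + a = a + b - n from by ring,
      show n - b = -(b - n) from by ring,
      Real.rpow_neg (by norm_num : (0:ℝ) ≤ 2)]
    ring
  have hk1 : (0:ℝ) < C₀ * 2 ^ (n - α) / (1 - 2 ^ (-α)) :=
    div_pos (mul_pos hC₀ (Real.rpow_pos_of_pos two_pos _)) hwα
  have hk2 : (0:ℝ) < C₀ * 2 ^ (n - β) / (1 - 2 ^ (-β)) :=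
    div_pos (mul_pos hC₀ (Real.rpow_pos_of_pos two_pos _)) hwβ
  rcases lt_trichotomy (α + β) n with hc | hc | hc
  · -- subcritical case
    set w := (2:ℝ) ^ (α + β - n) with hwdef
    have hw0 : 0 ≤ w := Real.rpow_nonneg (by norm_num) _
    have hw1 : w < 1 := Real.rpow_lt_one_of_one_lt_of_neg one_lt_two (by linarith)
    have hgeo : ∀ N : ℕ, ∑ k ∈ Finset.range N, w ^ k ≤ (1 - w)⁻¹ := fun N =>
      ((summable_geometric_of_lt_one hw0 hw1).sum_le_tsum (Finset.range N)
        (fun i _ => pow_nonneg hw0 i)).trans_eq (tsum_geometric_of_lt_one hw0 hw1)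
    refine ⟨C₀ * 2 ^ (n - α) / (1 - 2 ^ (-α)) * 2 ^ (n - β)
        + C₀ * 2 ^ (n - β) / (1 - 2 ^ (-β)) * 2 ^ (n - α)
        + 2 * (C₀ * 2 ^ n * (1 - w)⁻¹), ?_, ?_⟩
    · have h3 : (0:ℝ) < C₀ * 2 ^ n * (1 - w)⁻¹ :=
        mul_pos (mul_pos hC₀ (Real.rpow_pos_of_pos two_pos _)) (inv_pos.2 (by linarith))
      have h1 : (0:ℝ) < C₀ * 2 ^ (n - α) / (1 - 2 ^ (-α)) * 2 ^ (n - β) :=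
        mul_pos hk1 (Real.rpow_pos_of_pos two_pos _)
      have h2 : (0:ℝ) < C₀ * 2 ^ (n - β) / (1 - 2 ^ (-β)) * 2 ^ (n - α) :=
        mul_pos hk2 (Real.rpow_pos_of_pos two_pos _)
      linarith
    · intro x y hxy
      rw [if_pos hc]
      have hρ : 0 < dist x y := dist_pos.2 hxy
      have hρe : (0:ℝ) ≤ dist x y ^ (α + β - n) := Real.rpow_nonneg dist_nonneg _
      have hT : ∑ k ∈ Finset.range (Nf x y),
          C₀ * 2 ^ n * dist x y ^ (α + β - n) * w ^ k ≤
          C₀ * 2 ^ n * (1 - w)⁻¹ * dist x y ^ (α + β - n) := by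
        rw [← Finset.mul_sum]
        calc C₀ * 2 ^ n * dist x y ^ (α + β - n) * ∑ k ∈ Finset.range (Nf x y), w ^ k
            ≤ C₀ * 2 ^ n * dist x y ^ (α + β - n) * (1 - w)⁻¹ :=
              mul_le_mul_of_nonneg_left (hgeo _)
                (mul_nonneg (mul_nonneg hC₀.le (Real.rpow_nonneg (by norm_num) _)) hρe)
          _ = C₀ * 2 ^ n * (1 - w)⁻¹ * dist x y ^ (α + β - n) := by ring
      have hPle : P x y ≤ (C₀ * 2 ^ (n - α) / (1 - 2 ^ (-α)) * 2 ^ (n - β)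
          + C₀ * 2 ^ (n - β) / (1 - 2 ^ (-β)) * 2 ^ (n - α)
          + 2 * (C₀ * 2 ^ n * (1 - w)⁻¹)) * dist x y ^ (α + β - n) := by
        simp only [hPdef]
        rw [heqd x y hxy α β, heqd x y hxy β α,
          show β + α - n = α + β - n from by ring]
        linarith [hT]
      calc |∫ z, X x z * Y z y ∂μ| ≤ C_X * C_Y * P x y := (hmain x y hxy).2
        _ ≤ C_X * C_Y * ((C₀ * 2 ^ (n - α) / (1 - 2 ^ (-α)) * 2 ^ (n - β)
            + C₀ * 2 ^ (n - β) / (1 - 2 ^ (-β)) * 2 ^ (n - α)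
            + 2 * (C₀ * 2 ^ n * (1 - w)⁻¹)) * dist x y ^ (α + β - n)) :=
          mul_le_mul_of_nonneg_left hPle (mul_nonneg hCX hCY)
        _ = _ := by ring
  · -- critical case
    set c₁ := Real.log (D + 1) / Real.log 2 + 1 / Real.log 2 + 1 with hc₁def
    have hc₁ : 0 < c₁ := by
      have : 0 ≤ Real.log (D + 1) / Real.log 2 := div_nonneg hlogD hlog2.le
      have : 0 < 1 / Real.log 2 := by positivity
      rw [hc₁def]
      positivity
    refine ⟨C₀ * 2 ^ (n - α) / (1 - 2 ^ (-α)) * 2 ^ (n - β)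
        + C₀ * 2 ^ (n - β) / (1 - 2 ^ (-β)) * 2 ^ (n - α)
        + 2 * (C₀ * 2 ^ n * c₁), ?_, ?_⟩
    · have h3 : (0:ℝ) < C₀ * 2 ^ n * c₁ :=
        mul_pos (mul_pos hC₀ (Real.rpow_pos_of_pos two_pos _)) hc₁
      have h1 : (0:ℝ) < C₀ * 2 ^ (n - α) / (1 - 2 ^ (-α)) * 2 ^ (n - β) :=
        mul_pos hk1 (Real.rpow_pos_of_pos two_pos _)
      have h2 : (0:ℝ) < C₀ * 2 ^ (n - β) / (1 - 2 ^ (-β)) * 2 ^ (n - α) :=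
        mul_pos hk2 (Real.rpow_pos_of_pos two_pos _)
      exact add_pos (add_pos h1 h2) (mul_pos two_pos h3)
    · intro x y hxy
      rw [if_neg (by rw [hc]; exact lt_irrefl n), if_pos hc]
      have hρ : 0 < dist x y := dist_pos.2 hxy
      have hzero : α + β - n = 0 := by rw [hc]; ring
      have hL : 0 ≤ |Real.log (dist x y)| := abs_nonneg _
      have hNlin := (hNprop x y hxy).2.2
      have hsum : ∑ k ∈ Finset.range (Nf x y),
          C₀ * 2 ^ n * dist x y ^ (α + β - n) * ((2:ℝ) ^ (α + β - n)) ^ k =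
          ((Nf x y : ℕ):ℝ) * (C₀ * 2 ^ n) := by
        rw [hzero]
        simp [Real.rpow_zero, Finset.sum_const, Finset.card_range, nsmul_eq_mul]
      have e2 : ((Nf x y : ℕ):ℝ) * (C₀ * 2 ^ n) ≤
          C₀ * 2 ^ n * c₁ * (1 + |Real.log (dist x y)|) := by
        calc ((Nf x y : ℕ):ℝ) * (C₀ * 2 ^ n)
            ≤ (c₁ * (1 + |Real.log (dist x y)|)) * (C₀ * 2 ^ n) :=
              mul_le_mul_of_nonneg_right hNlin (by positivity)
          _ = C₀ * 2 ^ n * c₁ * (1 + |Real.log (dist x y)|) := by ring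
      have hPle : P x y ≤ (C₀ * 2 ^ (n - α) / (1 - 2 ^ (-α)) * 2 ^ (n - β)
          + C₀ * 2 ^ (n - β) / (1 - 2 ^ (-β)) * 2 ^ (n - α)
          + 2 * (C₀ * 2 ^ n * c₁)) * (1 + |Real.log (dist x y)|) := by
        have h1 : (0:ℝ) ≤ C₀ * 2 ^ (n - α) / (1 - 2 ^ (-α)) * 2 ^ (n - β) :=
          (mul_pos hk1 (Real.rpow_pos_of_pos two_pos _)).le
        have h2 : (0:ℝ) ≤ C₀ * 2 ^ (n - β) / (1 - 2 ^ (-β)) * 2 ^ (n - α) :=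
          (mul_pos hk2 (Real.rpow_pos_of_pos two_pos _)).le
        have hL1 : (1:ℝ) ≤ 1 + |Real.log (dist x y)| := by linarith
        simp only [hPdef]
        rw [heqd x y hxy α β, heqd x y hxy β α,
          show β + α - n = α + β - n from by ring, hsum, hzero, Real.rpow_zero]
        calc C₀ * 2 ^ (n - α) / (1 - 2 ^ (-α)) * (2 ^ (n - β) * 1)
              + ((Nf x y : ℕ):ℝ) * (C₀ * 2 ^ n) +
              (C₀ * 2 ^ (n - β) / (1 - 2 ^ (-β)) * (2 ^ (n - α) * 1)
              + ((Nf x y : ℕ):ℝ) * (C₀ * 2 ^ n))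
            = (C₀ * 2 ^ (n - α) / (1 - 2 ^ (-α)) * 2 ^ (n - β)
              + C₀ * 2 ^ (n - β) / (1 - 2 ^ (-β)) * 2 ^ (n - α)) * 1
              + 2 * (((Nf x y : ℕ):ℝ) * (C₀ * 2 ^ n)) := by ring
          _ ≤ (C₀ * 2 ^ (n - α) / (1 - 2 ^ (-α)) * 2 ^ (n - β)
              + C₀ * 2 ^ (n - β) / (1 - 2 ^ (-β)) * 2 ^ (n - α)) *
                (1 + |Real.log (dist x y)|)
              + 2 * (C₀ * 2 ^ n * c₁ * (1 + |Real.log (dist x y)|)) :=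
            add_le_add (mul_le_mul_of_nonneg_left hL1 (add_nonneg h1 h2))
              (mul_le_mul_of_nonneg_left e2 (by norm_num))
          _ = (C₀ * 2 ^ (n - α) / (1 - 2 ^ (-α)) * 2 ^ (n - β)
              + C₀ * 2 ^ (n - β) / (1 - 2 ^ (-β)) * 2 ^ (n - α)
              + 2 * (C₀ * 2 ^ n * c₁)) * (1 + |Real.log (dist x y)|) := by ring
      calc |∫ z, X x z * Y z y ∂μ| ≤ C_X * C_Y * P x y := (hmain x y hxy).2
        _ ≤ C_X * C_Y * ((C₀ * 2 ^ (n - α) / (1 - 2 ^ (-α)) * 2 ^ (n - β)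
            + C₀ * 2 ^ (n - β) / (1 - 2 ^ (-β)) * 2 ^ (n - α)
            + 2 * (C₀ * 2 ^ n * c₁)) * (1 + |Real.log (dist x y)|)) :=
          mul_le_mul_of_nonneg_left hPle (mul_nonneg hCX hCY)
        _ = _ := by ring
  · -- supercritical case
    set w := (2:ℝ) ^ (α + β - n) with hwdef
    have hw1 : 1 < w := by
      have := Real.rpow_lt_rpow_of_exponent_lt one_lt_two (show (0:ℝ) < α + β - n by linarith)
      rwa [Real.rpow_zero] at this
    have hw0 : 0 < w - 1 := by linarith
    set E := (2 * (D + 1)) ^ (α + β - n) with hEdef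
    have hE0 : 0 < E := Real.rpow_pos_of_pos (by linarith) _
    refine ⟨C₀ * 2 ^ (n - α) / (1 - 2 ^ (-α)) * 2 ^ (n - β) * (D + 1) ^ (α + β - n)
        + C₀ * 2 ^ (n - β) / (1 - 2 ^ (-β)) * 2 ^ (n - α) * (D + 1) ^ (α + β - n)
        + 2 * (C₀ * 2 ^ n * (E / (w - 1))), ?_, ?_⟩
    · have h3 : (0:ℝ) < C₀ * 2 ^ n * (E / (w - 1)) :=
        mul_pos (mul_pos hC₀ (Real.rpow_pos_of_pos two_pos _)) (div_pos hE0 hw0)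
      have h1 : (0:ℝ) < C₀ * 2 ^ (n - α) / (1 - 2 ^ (-α)) * 2 ^ (n - β) *
          (D + 1) ^ (α + β - n) :=
        mul_pos (mul_pos hk1 (Real.rpow_pos_of_pos two_pos _))
          (Real.rpow_pos_of_pos (by linarith) _)
      have h2 : (0:ℝ) < C₀ * 2 ^ (n - β) / (1 - 2 ^ (-β)) * 2 ^ (n - α) *
          (D + 1) ^ (α + β - n) :=
        mul_pos (mul_pos hk2 (Real.rpow_pos_of_pos two_pos _))
          (Real.rpow_pos_of_pos (by linarith) _)
      linarith
    · intro x y hxy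
      rw [if_neg (by linarith), if_neg (by linarith)]
      have hρ : 0 < dist x y := dist_pos.2 hxy
      have hρD1 : dist x y ≤ D + 1 := by linarith [hDb x y]
      have hρe : (0:ℝ) ≤ dist x y ^ (α + β - n) := Real.rpow_nonneg dist_nonneg _
      have hρeD : dist x y ^ (α + β - n) ≤ (D + 1) ^ (α + β - n) :=
        Real.rpow_le_rpow dist_nonneg hρD1 (by linarith)
      have hwN : dist x y ^ (α + β - n) * w ^ (Nf x y) ≤ E := by
        have h1 : w ^ (Nf x y) = (2 ^ (((Nf x y):ℕ):ℝ)) ^ (α + β - n) := by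
          rw [← Real.rpow_natCast w (Nf x y), hwdef,
            ← Real.rpow_mul (by norm_num : (0:ℝ) ≤ 2),
            mul_comm (α + β - n) (((Nf x y):ℕ):ℝ),
            Real.rpow_mul (by norm_num : (0:ℝ) ≤ 2)]
        rw [h1, ← Real.mul_rpow dist_nonneg (Real.rpow_nonneg (by norm_num) _), hEdef]
        exact Real.rpow_le_rpow (by positivity) ((hNprop x y hxy).2.1) (by linarith)
      have hgeo : ∑ k ∈ Finset.range (Nf x y), w ^ k ≤ w ^ (Nf x y) / (w - 1) := by
        rw [geom_sum_eq (by linarith : w ≠ 1)]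
        exact (div_le_div_iff_of_pos_right hw0).2 (by linarith)
      have hT : ∑ k ∈ Finset.range (Nf x y),
          C₀ * 2 ^ n * dist x y ^ (α + β - n) * w ^ k ≤ C₀ * 2 ^ n * (E / (w - 1)) := by
        rw [← Finset.mul_sum]
        have hc0 : (0:ℝ) ≤ C₀ * 2 ^ n :=
          mul_nonneg hC₀.le (Real.rpow_nonneg (by norm_num) _)
        calc C₀ * 2 ^ n * dist x y ^ (α + β - n) * ∑ k ∈ Finset.range (Nf x y), w ^ k
            ≤ C₀ * 2 ^ n * dist x y ^ (α + β - n) * (w ^ (Nf x y) / (w - 1)) :=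
              mul_le_mul_of_nonneg_left hgeo (mul_nonneg hc0 hρe)
          _ = C₀ * 2 ^ n * ((dist x y ^ (α + β - n) * w ^ (Nf x y)) / (w - 1)) := by ring
          _ ≤ C₀ * 2 ^ n * (E / (w - 1)) := by
              refine mul_le_mul_of_nonneg_left ?_ hc0
              exact (div_le_div_iff_of_pos_right hw0).2 hwN
      have hPle : P x y ≤ (C₀ * 2 ^ (n - α) / (1 - 2 ^ (-α)) * 2 ^ (n - β) * (D + 1) ^ (α + β - n)
          + C₀ * 2 ^ (n - β) / (1 - 2 ^ (-β)) * 2 ^ (n - α) * (D + 1) ^ (α + β - n)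
          + 2 * (C₀ * 2 ^ n * (E / (w - 1)))) * 1 := by
        simp only [hPdef]
        rw [heqd x y hxy α β, heqd x y hxy β α,
          show β + α - n = α + β - n from by ring]
        have b1 : C₀ * 2 ^ (n - α) / (1 - 2 ^ (-α)) * (2 ^ (n - β) * dist x y ^ (α + β - n)) ≤
            C₀ * 2 ^ (n - α) / (1 - 2 ^ (-α)) * 2 ^ (n - β) * (D + 1) ^ (α + β - n) := by
          rw [← mul_assoc]
          exact mul_le_mul_of_nonneg_left hρeD
            (mul_pos hk1 (Real.rpow_pos_of_pos two_pos _)).le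
        have b2 : C₀ * 2 ^ (n - β) / (1 - 2 ^ (-β)) * (2 ^ (n - α) * dist x y ^ (α + β - n)) ≤
            C₀ * 2 ^ (n - β) / (1 - 2 ^ (-β)) * 2 ^ (n - α) * (D + 1) ^ (α + β - n) := by
          rw [← mul_assoc]
          exact mul_le_mul_of_nonneg_left hρeD
            (mul_pos hk2 (Real.rpow_pos_of_pos two_pos _)).le
        linarith
      calc |∫ z, X x z * Y z y ∂μ| ≤ C_X * C_Y * P x y := (hmain x y hxy).2
        _ ≤ C_X * C_Y * ((C₀ * 2 ^ (n - α) / (1 - 2 ^ (-α)) * 2 ^ (n - β) * (D + 1) ^ (α + β - n)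
            + C₀ * 2 ^ (n - β) / (1 - 2 ^ (-β)) * 2 ^ (n - α) * (D + 1) ^ (α + β - n)
            + 2 * (C₀ * 2 ^ n * (E / (w - 1)))) * 1) :=
          mul_le_mul_of_nonneg_left hPle (mul_nonneg hCX hCY)
        _ = _ := by ring
end
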